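/- arXiv:1903.01053 — 2 statements merged into one kernel-verified Lean document; each statement's English description precedes it below -/
import Mathlib

section
/- For a positive real number α and a positive integer k, define the polytope T(α,k) = {v ∈ ℝ^n : ‖v‖_∞ ≤ α, ‖v‖₁ ≤ kα}, and for v ∈ ℝ^n define U(α,k,v) = {u ∈ ℝ^n : supp(u) ⊆ supp(v), ‖u‖₀ ≤ k, ‖u‖₁ = ‖v‖₁, ‖u‖_∞ ≤ α}. Then v ∈ T(α,k) if and only if v is in the convex hull of U(α,k,v). In particular, any v ∈ T(α,k) can be expressed as v = ∑_{i=1}^{c} γ_i u_i for some finite c, where each u_i ∈ U(α,k,v), 0 ≤ γ_i ≤ 1, and ∑_{i=1}^{c} γ_i = 1. -/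
open Finset

/-- `‖u‖₀`: number of nonzero entries of `u`. -/
noncomputable def l0norm {n : ℕ} (u : Fin n → ℝ) : ℕ :=
  (Finset.univ.filter fun i => u i ≠ 0).card

/-- The set `U(α, k, v)`. -/
def sparseSet {n : ℕ} (α : ℝ) (k : ℕ) (v : Fin n → ℝ) : Set (Fin n → ℝ) :=
  {u | (∀ i, u i ≠ 0 → v i ≠ 0) ∧ l0norm u ≤ k ∧
    (∑ i, |u i|) = (∑ i, |v i|) ∧ ∀ i, |u i| ≤ α}



lemma base_mem {n : ℕ} {α : ℝ} (hα : 0 < α) {k : ℕ} {v : Fin n → ℝ}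
    (hsum : (∑ i, |v i|) ≤ k * α) {w : Fin n → ℝ}
    (hcard : (univ.filter fun i => w i ≠ 0 ∧ w i ≠ α).card ≤ 1)
    (h0 : ∀ i, 0 ≤ w i) (h1 : ∀ i, w i ≤ α) (hsupp : ∀ i, w i ≠ 0 → v i ≠ 0)
    (hw : (∑ i, w i) = (∑ i, |v i|)) :
    (fun i => (if v i < 0 then (-1:ℝ) else 1) * w i) ∈ sparseSet α k v := by
  set u : Fin n → ℝ := fun i => (if v i < 0 then (-1:ℝ) else 1) * w i with hu
  have habs : ∀ i, |u i| = w i := by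
    intro i
    simp only [hu]
    by_cases h : v i < 0 <;> simp [h, abs_of_nonneg (h0 i)]
  have hne : ∀ i, u i ≠ 0 ↔ w i ≠ 0 := by
    intro i
    simp only [hu]
    by_cases h : v i < 0 <;> simp [h]
  -- support bound
  set S := univ.filter (fun i => w i ≠ 0) with hS
  set A := univ.filter (fun i => w i = α) with hA
  have hAsum : ∑ i ∈ A, w i = A.card * α := by
    rw [Finset.sum_congr rfl (fun i hi => (mem_filter.1 hi).2), Finset.sum_const,
      nsmul_eq_mul]
  have hAle : (A.card : ℝ) * α ≤ ∑ i, w i := by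
    rw [← hAsum]
    exact Finset.sum_le_sum_of_subset_of_nonneg (subset_univ _) (fun i _ _ => h0 i)
  have hcardS : S.card ≤ k := by
    by_cases hex : ∃ i ∈ S, w i ≠ α
    · obtain ⟨i₀, hi₀S, hi₀⟩ := hex
      have hi₀ne : w i₀ ≠ 0 := (mem_filter.1 hi₀S).2
      have hi₀A : i₀ ∉ A := by simp [hA, hi₀]
      have hpos : 0 < w i₀ := lt_of_le_of_ne (h0 i₀) (Ne.symm hi₀ne)
      have hsum2 : ∑ i ∈ insert i₀ A, w i = w i₀ + A.card * α := by
        rw [Finset.sum_insert hi₀A, hAsum]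
      have hlt : (A.card : ℝ) * α < ∑ i, w i := by
        have := Finset.sum_le_sum_of_subset_of_nonneg (subset_univ (insert i₀ A))
          (fun i _ _ => h0 i)
        rw [hsum2] at this
        linarith
      have hAk : A.card < k := by
        have : (A.card : ℝ) * α < k * α := lt_of_lt_of_le (hlt.trans_le (hw ▸ hsum)) le_rfl
        have h3 : (A.card : ℝ) < k := lt_of_mul_lt_mul_right (by linarith) hα.le
        exact_mod_cast h3
      have hsub : S ⊆ insert i₀ A := by
        intro i hiS
        by_cases hiα : w i = α
        · exact mem_insert_of_mem (by simp [hA, hiα])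
        · have hi : i ∈ univ.filter fun i => w i ≠ 0 ∧ w i ≠ α := by
            simp only [mem_filter, mem_univ, true_and]
            exact ⟨(mem_filter.1 hiS).2, hiα⟩
          have hi₀' : i₀ ∈ univ.filter fun i => w i ≠ 0 ∧ w i ≠ α := by
            simp only [mem_filter, mem_univ, true_and]
            exact ⟨hi₀ne, hi₀⟩
          have : i = i₀ := Finset.card_le_one.1 hcard i hi i₀ hi₀'
          exact this ▸ mem_insert_self _ _
      calc S.card ≤ (insert i₀ A).card := Finset.card_le_card hsub
        _ ≤ A.card + 1 := Finset.card_insert_le _ _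
        _ ≤ k := hAk
    · push_neg at hex
      have hsub : S ⊆ A := fun i hi => by simp [hA, hex i hi]
      have hAk : A.card ≤ k := by
        have h2 : (A.card : ℝ) * α ≤ k * α := hAle.trans (hw ▸ hsum)
        exact_mod_cast le_of_mul_le_mul_right h2 hα
      exact (Finset.card_le_card hsub).trans hAk
  refine ⟨fun i hi => hsupp i ((hne i).1 hi), ?_, ?_, fun i => (habs i) ▸ h1 i⟩
  · have : (univ.filter fun i => u i ≠ 0) = S := by
      apply Finset.filter_congr
      intro i _
      simp [hne i]
    rw [l0norm, this]; exact hcardS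
  · rw [← hw]; exact Finset.sum_congr rfl (fun i _ => habs i)

lemma sparse_sum_le {n : ℕ} {α : ℝ} (hα : 0 ≤ α) {k : ℕ} {u : Fin n → ℝ}
    (h0 : l0norm u ≤ k) (hinf : ∀ i, |u i| ≤ α) : (∑ i, |u i|) ≤ k * α := by
  have h1 : (∑ i, |u i|) = ∑ i ∈ univ.filter (fun i => u i ≠ 0), |u i| :=
    (Finset.sum_subset (filter_subset _ _) (by
      intro i _ h
      simp only [mem_filter, mem_univ, true_and, not_not] at h
      simp [h])).symm
  rw [h1]
  calc ∑ i ∈ univ.filter (fun i => u i ≠ 0), |u i|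
      ≤ (univ.filter (fun i => u i ≠ 0)).card • α :=
        Finset.sum_le_card_nsmul _ _ α (fun i _ => hinf i)
    _ = ((l0norm u : ℝ)) * α := by rw [nsmul_eq_mul]; rfl
    _ ≤ k * α := mul_le_mul_of_nonneg_right (Nat.cast_le.2 h0) hα

lemma key_mem {n : ℕ} {α : ℝ} (hα : 0 < α) {k : ℕ} {v : Fin n → ℝ}
    (hsum : (∑ i, |v i|) ≤ k * α) :
    ∀ (N : ℕ) (w : Fin n → ℝ),
      (univ.filter fun i => w i ≠ 0 ∧ w i ≠ α).card ≤ N →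
      (∀ i, 0 ≤ w i) → (∀ i, w i ≤ α) → (∀ i, w i ≠ 0 → v i ≠ 0) →
      (∑ i, w i) = (∑ i, |v i|) →
      (fun i => (if v i < 0 then (-1:ℝ) else 1) * w i) ∈ convexHull ℝ (sparseSet α k v) := by
  intro N
  induction N with
  | zero =>
    intro w hcard h0 h1 hsupp hw
    exact subset_convexHull ℝ _ (base_mem hα hsum (hcard.trans (by norm_num)) h0 h1 hsupp hw)
  | succ N ih =>
    intro w hcard h0 h1 hsupp hw
    by_cases hc1 : (univ.filter fun i => w i ≠ 0 ∧ w i ≠ α).card ≤ 1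
    · exact subset_convexHull ℝ _ (base_mem hα hsum hc1 h0 h1 hsupp hw)
    · push_neg at hc1
      obtain ⟨i, hi, j, hj, hij⟩ := Finset.one_lt_card.1 hc1
      have hi' := (mem_filter.1 hi).2
      have hj' := (mem_filter.1 hj).2
      have hipos : 0 < w i := lt_of_le_of_ne (h0 i) (Ne.symm hi'.1)
      have hilt : w i < α := lt_of_le_of_ne (h1 i) hi'.2
      have hjpos : 0 < w j := lt_of_le_of_ne (h0 j) (Ne.symm hj'.1)
      have hjlt : w j < α := lt_of_le_of_ne (h1 j) hj'.2
      set δ := min (α - w i) (w j) with hδdef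
      set δ' := min (w i) (α - w j) with hδ'def
      have hδ : 0 < δ := lt_min (by linarith) hjpos
      have hδ' : 0 < δ' := lt_min hipos (by linarith)
      have hδα : δ ≤ α - w i := min_le_left _ _
      have hδj : δ ≤ w j := min_le_right _ _
      have hδ'i : δ' ≤ w i := min_le_left _ _
      have hδ'α : δ' ≤ α - w j := min_le_right _ _
      set w₁ : Fin n → ℝ := fun l => w l + (if l = i then δ else 0) - (if l = j then δ else 0)
        with hw₁def
      set w₂ : Fin n → ℝ := fun l => w l - (if l = i then δ' else 0) + (if l = j then δ' else 0)
        with hw₂def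
      have hw₁i : w₁ i = w i + δ := by simp [hw₁def, hij]
      have hw₁j : w₁ j = w j - δ := by simp [hw₁def, Ne.symm hij]
      have hw₁o : ∀ l, l ≠ i → l ≠ j → w₁ l = w l := by intro l hli hlj; simp [hw₁def, hli, hlj]
      have hw₂i : w₂ i = w i - δ' := by simp [hw₂def, hij]
      have hw₂j : w₂ j = w j + δ' := by simp [hw₂def, Ne.symm hij]
      have hw₂o : ∀ l, l ≠ i → l ≠ j → w₂ l = w l := by intro l hli hlj; simp [hw₂def, hli, hlj]
      -- basic bounds
      have h0₁ : ∀ l, 0 ≤ w₁ l := by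
        intro l
        by_cases hli : l = i
        · rw [hli, hw₁i]; linarith
        by_cases hlj : l = j
        · rw [hlj, hw₁j]; linarith
        · rw [hw₁o l hli hlj]; exact h0 l
      have h1₁ : ∀ l, w₁ l ≤ α := by
        intro l
        by_cases hli : l = i
        · rw [hli, hw₁i]; linarith
        by_cases hlj : l = j
        · rw [hlj, hw₁j]; linarith [h1 j]
        · rw [hw₁o l hli hlj]; exact h1 l
      have h0₂ : ∀ l, 0 ≤ w₂ l := by
        intro l
        by_cases hli : l = i
        · rw [hli, hw₂i]; linarith
        by_cases hlj : l = j
        · rw [hlj, hw₂j]; linarith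
        · rw [hw₂o l hli hlj]; exact h0 l
      have h1₂ : ∀ l, w₂ l ≤ α := by
        intro l
        by_cases hli : l = i
        · rw [hli, hw₂i]; linarith [h1 i]
        by_cases hlj : l = j
        · rw [hlj, hw₂j]; linarith
        · rw [hw₂o l hli hlj]; exact h1 l
      have hsupp₁ : ∀ l, w₁ l ≠ 0 → v l ≠ 0 := by
        intro l hl
        by_cases hli : l = i
        · rw [hli]; exact hsupp i hi'.1
        by_cases hlj : l = j
        · rw [hlj]; exact hsupp j hj'.1
        · rw [hw₁o l hli hlj] at hl; exact hsupp l hl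
      have hsupp₂ : ∀ l, w₂ l ≠ 0 → v l ≠ 0 := by
        intro l hl
        by_cases hli : l = i
        · rw [hli]; exact hsupp i hi'.1
        by_cases hlj : l = j
        · rw [hlj]; exact hsupp j hj'.1
        · rw [hw₂o l hli hlj] at hl; exact hsupp l hl
      have hsum₁ : (∑ l, w₁ l) = ∑ i, |v i| := by
        rw [← hw]
        simp only [hw₁def]
        rw [Finset.sum_sub_distrib, Finset.sum_add_distrib]
        simp [Finset.sum_ite_eq']
      have hsum₂ : (∑ l, w₂ l) = ∑ i, |v i| := by
        rw [← hw]
        simp only [hw₂def]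
        rw [Finset.sum_add_distrib, Finset.sum_sub_distrib]
        simp [Finset.sum_ite_eq']
      -- fractional-set subsets
      have hF₁sub : (univ.filter fun l => w₁ l ≠ 0 ∧ w₁ l ≠ α) ⊆
          (univ.filter fun l => w l ≠ 0 ∧ w l ≠ α) := by
        intro l hl
        by_cases hli : l = i
        · subst hli; exact hi
        by_cases hlj : l = j
        · subst hlj; exact hj
        · simp only [mem_filter, mem_univ, true_and, hw₁o l hli hlj] at hl ⊢; exact hl
      have hF₂sub : (univ.filter fun l => w₂ l ≠ 0 ∧ w₂ l ≠ α) ⊆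
          (univ.filter fun l => w l ≠ 0 ∧ w l ≠ α) := by
        intro l hl
        by_cases hli : l = i
        · subst hli; exact hi
        by_cases hlj : l = j
        · subst hlj; exact hj
        · simp only [mem_filter, mem_univ, true_and, hw₂o l hli hlj] at hl ⊢; exact hl
      have hcard₁ : (univ.filter fun l => w₁ l ≠ 0 ∧ w₁ l ≠ α).card ≤ N := by
        rcases min_cases (α - w i) (w j) with ⟨he, _⟩ | ⟨he, _⟩
        · -- δ = α - w i, so w₁ i = α, i not in frac set
          have hiF : i ∉ (univ.filter fun l => w₁ l ≠ 0 ∧ w₁ l ≠ α) := by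
            simp only [mem_filter, mem_univ, true_and, not_and, not_not]
            intro _
            rw [hw₁i, hδdef, he]; ring
          have : (univ.filter fun l => w₁ l ≠ 0 ∧ w₁ l ≠ α) ⊆
              ((univ.filter fun l => w l ≠ 0 ∧ w l ≠ α).erase i) := by
            intro l hl
            exact mem_erase.2 ⟨fun h => hiF (h ▸ hl), hF₁sub hl⟩
          calc (univ.filter fun l => w₁ l ≠ 0 ∧ w₁ l ≠ α).card
              ≤ _ := Finset.card_le_card this
            _ = (univ.filter fun l => w l ≠ 0 ∧ w l ≠ α).card - 1 :=
                Finset.card_erase_of_mem hi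
            _ ≤ N := by omega
        · -- δ = w j, so w₁ j = 0
          have hjF : j ∉ (univ.filter fun l => w₁ l ≠ 0 ∧ w₁ l ≠ α) := by
            simp only [mem_filter, mem_univ, true_and, not_and, not_not]
            intro h
            exact absurd (show w₁ j = 0 by rw [hw₁j, hδdef, he]; ring) h
          have : (univ.filter fun l => w₁ l ≠ 0 ∧ w₁ l ≠ α) ⊆
              ((univ.filter fun l => w l ≠ 0 ∧ w l ≠ α).erase j) := by
            intro l hl
            exact mem_erase.2 ⟨fun h => hjF (h ▸ hl), hF₁sub hl⟩
          calc (univ.filter fun l => w₁ l ≠ 0 ∧ w₁ l ≠ α).card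
              ≤ _ := Finset.card_le_card this
            _ = (univ.filter fun l => w l ≠ 0 ∧ w l ≠ α).card - 1 :=
                Finset.card_erase_of_mem hj
            _ ≤ N := by omega
      have hcard₂ : (univ.filter fun l => w₂ l ≠ 0 ∧ w₂ l ≠ α).card ≤ N := by
        rcases min_cases (w i) (α - w j) with ⟨he, _⟩ | ⟨he, _⟩
        · -- δ' = w i, so w₂ i = 0
          have hiF : i ∉ (univ.filter fun l => w₂ l ≠ 0 ∧ w₂ l ≠ α) := by
            simp only [mem_filter, mem_univ, true_and, not_and, not_not]
            intro h
            exact absurd (show w₂ i = 0 by rw [hw₂i, hδ'def, he]; ring) h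
          have : (univ.filter fun l => w₂ l ≠ 0 ∧ w₂ l ≠ α) ⊆
              ((univ.filter fun l => w l ≠ 0 ∧ w l ≠ α).erase i) := by
            intro l hl
            exact mem_erase.2 ⟨fun h => hiF (h ▸ hl), hF₂sub hl⟩
          calc (univ.filter fun l => w₂ l ≠ 0 ∧ w₂ l ≠ α).card
              ≤ _ := Finset.card_le_card this
            _ = (univ.filter fun l => w l ≠ 0 ∧ w l ≠ α).card - 1 :=
                Finset.card_erase_of_mem hi
            _ ≤ N := by omega
        · -- δ' = α - w j, so w₂ j = α
          have hjF : j ∉ (univ.filter fun l => w₂ l ≠ 0 ∧ w₂ l ≠ α) := by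
            simp only [mem_filter, mem_univ, true_and, not_and, not_not]
            intro _
            rw [hw₂j, hδ'def, he]; ring
          have : (univ.filter fun l => w₂ l ≠ 0 ∧ w₂ l ≠ α) ⊆
              ((univ.filter fun l => w l ≠ 0 ∧ w l ≠ α).erase j) := by
            intro l hl
            exact mem_erase.2 ⟨fun h => hjF (h ▸ hl), hF₂sub hl⟩
          calc (univ.filter fun l => w₂ l ≠ 0 ∧ w₂ l ≠ α).card
              ≤ _ := Finset.card_le_card this
            _ = (univ.filter fun l => w l ≠ 0 ∧ w l ≠ α).card - 1 :=
                Finset.card_erase_of_mem hj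
            _ ≤ N := by omega
      have m₁ := ih w₁ hcard₁ h0₁ h1₁ hsupp₁ hsum₁
      have m₂ := ih w₂ hcard₂ h0₂ h1₂ hsupp₂ hsum₂
      set lam := δ' / (δ + δ') with hlam
      have hδδ' : 0 < δ + δ' := by linarith
      have hlam0 : 0 ≤ lam := div_nonneg hδ'.le hδδ'.le
      have hlam1 : 0 ≤ 1 - lam := by
        rw [sub_nonneg, hlam, div_le_one hδδ']; linarith
      have hmix := (convex_convexHull ℝ (sparseSet α k v)) m₁ m₂ hlam0 hlam1 (by ring)
      have hcomb : ∀ l, w l = lam * w₁ l + (1 - lam) * w₂ l := by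
        intro l
        by_cases hli : l = i
        · rw [hli, hw₁i, hw₂i, hlam]; field_simp; ring
        by_cases hlj : l = j
        · rw [hlj, hw₁j, hw₂j, hlam]; field_simp; ring
        · rw [hw₁o l hli hlj, hw₂o l hli hlj]; ring
      convert hmix using 1
      funext l
      simp only [Pi.add_apply, Pi.smul_apply, smul_eq_mul]
      rw [hcomb l]
      ring

theorem stmt5 {n : ℕ} (α : ℝ) (hα : 0 < α) (k : ℕ) (hk : 0 < k) (v : Fin n → ℝ) :
    (((∀ i, |v i| ≤ α) ∧ (∑ i, |v i|) ≤ k * α) ↔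
      v ∈ convexHull ℝ (sparseSet α k v)) ∧
    ((∀ i, |v i| ≤ α) ∧ (∑ i, |v i|) ≤ k * α →
      ∃ (c : ℕ) (γ : Fin c → ℝ) (u : Fin c → Fin n → ℝ),
        (∀ j, u j ∈ sparseSet α k v) ∧
        (∀ j, 0 ≤ γ j ∧ γ j ≤ 1) ∧ (∑ j, γ j) = 1 ∧ v = ∑ j, γ j • u j) := by
  have fwd : (∀ i, |v i| ≤ α) ∧ (∑ i, |v i|) ≤ k * α →
      v ∈ convexHull ℝ (sparseSet α k v) := by
    rintro ⟨hinf, hsum⟩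
    have := key_mem hα hsum n (fun i => |v i|)
      ((Finset.card_filter_le _ _).trans (by simp))
      (fun i => abs_nonneg _) hinf (fun i h => abs_ne_zero.1 h) rfl
    convert this using 1
    funext i
    by_cases h : v i < 0
    · simp [h, abs_of_neg h]
    · simp [h, abs_of_nonneg (not_lt.1 h)]
  have bwd : v ∈ convexHull ℝ (sparseSet α k v) →
      (∀ i, |v i| ≤ α) ∧ (∑ i, |v i|) ≤ k * α := by
    intro hv
    set C : Set (Fin n → ℝ) := {x | (∀ i, |x i| ≤ α) ∧ (∑ i, |x i|) ≤ k * α} with hC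
    have hconv : Convex ℝ C := by
      rintro x ⟨hx1, hx2⟩ y ⟨hy1, hy2⟩ a b ha hb hab
      constructor
      · intro i
        calc |(a • x + b • y) i| = |a * x i + b * y i| := rfl
          _ ≤ |a * x i| + |b * y i| := abs_add_le _ _
          _ = a * |x i| + b * |y i| := by
              rw [abs_mul, abs_mul, abs_of_nonneg ha, abs_of_nonneg hb]
          _ ≤ a * α + b * α := by
              gcongr; exacts [hx1 i, hy1 i]
          _ = α := by rw [← add_mul, hab, one_mul]
      · calc (∑ i, |(a • x + b • y) i|) = ∑ i, |a * x i + b * y i| := rfl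
          _ ≤ ∑ i, (a * |x i| + b * |y i|) := by
              apply Finset.sum_le_sum
              intro i _
              calc |a * x i + b * y i| ≤ |a * x i| + |b * y i| := abs_add_le _ _
                _ = a * |x i| + b * |y i| := by
                  rw [abs_mul, abs_mul, abs_of_nonneg ha, abs_of_nonneg hb]
          _ = a * (∑ i, |x i|) + b * (∑ i, |y i|) := by
              rw [Finset.sum_add_distrib, Finset.mul_sum, Finset.mul_sum]
          _ ≤ a * (k * α) + b * (k * α) := by gcongr
          _ = k * α := by rw [← add_mul, hab, one_mul]
    have hsub : sparseSet α k v ⊆ C := by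
      rintro u ⟨_, h0, _, hinf⟩
      exact ⟨hinf, sparse_sum_le hα.le h0 hinf⟩
    have := convexHull_min hsub hconv hv
    exact this
  refine ⟨⟨fwd, bwd⟩, ?_⟩
  intro h
  have hv := fwd h
  rw [mem_convexHull_iff_exists_fintype] at hv
  obtain ⟨ι, hι, wt, z, hw0, hw1, hz, hx⟩ := hv
  refine ⟨Fintype.card ι, fun j => wt ((Fintype.equivFin ι).symm j),
    fun j => z ((Fintype.equivFin ι).symm j), fun j => hz _, fun j => ?_, ?_, ?_⟩
  · refine ⟨hw0 _, ?_⟩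
    calc wt ((Fintype.equivFin ι).symm j)
        ≤ ∑ i, wt i := Finset.single_le_sum (fun i _ => hw0 i) (Finset.mem_univ _)
      _ = 1 := hw1
  · rw [Equiv.sum_comp (Fintype.equivFin ι).symm wt]
    exact hw1
  · rw [Equiv.sum_comp (Fintype.equivFin ι).symm (fun i => wt i • z i)]
    exact hx.symm
end

section
/- Let X, Y ∈ ℝ^{n₁×n₂} with n₁ ≤ n₂, set H = Y − X, and let E ⊆ {1,…,n₁} be any index set. Assuming Mirsky's inequality ∑_{i=1}^{n₁} σ_i(X+H) ≥ ∑_{i=1}^{n₁} |σ_i(X) − σ_i(H)| holds (singular values of each matrix sorted in decreasing order), it follows that ‖Y‖_* − ‖X‖_* ≥ −‖H_E‖_* + ‖H_{E^c}‖_* − 2‖X_{E^c}‖_*. -/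
open Finset

/-- Frobenius norm of a real matrix. -/
noncomputable def frobNorm {n₁ n₂ : ℕ} (M : Matrix (Fin n₁) (Fin n₂) ℝ) : ℝ :=
  Real.sqrt (∑ i, ∑ j, M i j ^ 2)

/-- Nuclear norm of a real matrix: sum of its singular values, i.e. of the
square roots of the eigenvalues of `M * Mᵀ`. -/
noncomputable def nucNorm {n₁ n₂ : ℕ} (M : Matrix (Fin n₁) (Fin n₂) ℝ) : ℝ :=
  ∑ i, Real.sqrt ((Matrix.isHermitian_mul_conjTranspose_self M).eigenvalues i)

/-- `A` satisfies the RIP of order `r` with constant `δ`. -/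
def HasRIP {n₁ n₂ m : ℕ} (A : Matrix (Fin n₁) (Fin n₂) ℝ →ₗ[ℝ] EuclideanSpace ℝ (Fin m))
    (r : ℕ) (δ : ℝ) : Prop :=
  ∀ M : Matrix (Fin n₁) (Fin n₂) ℝ, M.rank ≤ r →
    (1 - δ) * frobNorm M ^ 2 ≤ ‖A M‖ ^ 2 ∧ ‖A M‖ ^ 2 ≤ (1 + δ) * frobNorm M ^ 2

/-- The rank-one matrix `s • u vᵀ`. -/
noncomputable def rank1 {n₁ n₂ : ℕ} (s : ℝ) (u : Fin n₁ → ℝ) (v : Fin n₂ → ℝ) :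
    Matrix (Fin n₁) (Fin n₂) ℝ :=
  Matrix.of fun a b => s * u a * v b

theorem stmt9 {n₁ n₂ : ℕ} (hn : n₁ ≤ n₂)
    (X Y : Matrix (Fin n₁) (Fin n₂) ℝ)
    -- SVD of `X`, with singular values `σX` in decreasing order
    (σX : Fin n₁ → ℝ) (uX : Fin n₁ → Fin n₁ → ℝ) (vX : Fin n₁ → Fin n₂ → ℝ)
    (hσX0 : ∀ i, 0 ≤ σX i) (hσXmono : ∀ i j : Fin n₁, i ≤ j → σX j ≤ σX i)
    (huX : ∀ i j, ∑ a, uX i a * uX j a = if i = j then (1 : ℝ) else 0)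
    (hvX : ∀ i j, ∑ b, vX i b * vX j b = if i = j then (1 : ℝ) else 0)
    (hX : X = ∑ i, rank1 (σX i) (uX i) (vX i))
    -- SVD of `H = Y - X`, with singular values `σH` in decreasing order
    (σH : Fin n₁ → ℝ) (uH : Fin n₁ → Fin n₁ → ℝ) (vH : Fin n₁ → Fin n₂ → ℝ)
    (hσH0 : ∀ i, 0 ≤ σH i) (hσHmono : ∀ i j : Fin n₁, i ≤ j → σH j ≤ σH i)
    (huH : ∀ i j, ∑ a, uH i a * uH j a = if i = j then (1 : ℝ) else 0)
    (hvH : ∀ i j, ∑ b, vH i b * vH j b = if i = j then (1 : ℝ) else 0)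
    (hH : Y - X = ∑ i, rank1 (σH i) (uH i) (vH i))
    -- SVD of `Y = X + H`, with singular values `σY` in decreasing order
    (σY : Fin n₁ → ℝ) (uY : Fin n₁ → Fin n₁ → ℝ) (vY : Fin n₁ → Fin n₂ → ℝ)
    (hσY0 : ∀ i, 0 ≤ σY i) (hσYmono : ∀ i j : Fin n₁, i ≤ j → σY j ≤ σY i)
    (huY : ∀ i j, ∑ a, uY i a * uY j a = if i = j then (1 : ℝ) else 0)
    (hvY : ∀ i j, ∑ b, vY i b * vY j b = if i = j then (1 : ℝ) else 0)
    (hY : Y = ∑ i, rank1 (σY i) (uY i) (vY i))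
    -- Mirsky's inequality
    (hMirsky : (∑ i, |σX i - σH i|) ≤ ∑ i, σY i)
    (E : Finset (Fin n₁)) :
    -(∑ i ∈ E, σH i) + (∑ i ∈ Eᶜ, σH i) - 2 * (∑ i ∈ Eᶜ, σX i) ≤
      (∑ i, σY i) - (∑ i, σX i) := by
  have hE : ∑ i ∈ E, (σX i - σH i) ≤ ∑ i ∈ E, |σX i - σH i| :=
    Finset.sum_le_sum fun i _ => le_abs_self _
  have hEc : ∑ i ∈ Eᶜ, (σH i - σX i) ≤ ∑ i ∈ Eᶜ, |σX i - σH i| :=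
    Finset.sum_le_sum fun i _ => by rw [abs_sub_comm]; exact le_abs_self _
  have hsplit1 : ∑ i ∈ E, |σX i - σH i| + ∑ i ∈ Eᶜ, |σX i - σH i|
      = ∑ i, |σX i - σH i| := Finset.sum_add_sum_compl E _
  have hsplit2 : ∑ i ∈ E, σX i + ∑ i ∈ Eᶜ, σX i = ∑ i, σX i :=
    Finset.sum_add_sum_compl E _
  rw [Finset.sum_sub_distrib] at hE hEc
  linarith
end
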